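/- Let Cₑ be a symmetric positive definite real 3×3 matrix, let c₁₀, c₀₁ ∈ ℝ and η > 0, and set C̄ₑ := (det Cₑ)^{-1/3}·Cₑ. Define the second Piola–Kirchhoff stress Ŝ := (c₁₀·C̄ₑ − c₀₁·C̄ₑ⁻¹)^D·Cₑ⁻¹ and the Mandel tensor M := Cₑ·Ŝ. Then M = (c₁₀·C̄ₑ − c₀₁·C̄ₑ⁻¹)^D, in particular M is symmetric and deviatoric, and the internal dissipation is nonnegative: tr(M·(1/(2η))·M^D) ≥ 0. Hence the flow rule of the multiplicative Maxwell fluid satisfies the Clausius–Planck inequality for arbitrary mechanical loadings. -/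
import Mathlib


open Matrix

abbrev Mat := Matrix (Fin 3) (Fin 3) ℝ

/-- The unimodular part of a matrix. -/
noncomputable def unimod (M : Mat) : Mat := (M.det ^ (-(1 : ℝ) / 3)) • M

/-- The deviatoric part of a matrix. -/
noncomputable def dev (M : Mat) : Mat := M - (M.trace / 3) • (1 : Mat)

/-- for the Mooney–Rivlin potential the Mandel tensor
`M = Cₑ·Ŝ` with `Ŝ = (c₁₀·C̄ₑ − c₀₁·C̄ₑ⁻¹)^D·Cₑ⁻¹` equals `(c₁₀·C̄ₑ − c₀₁·C̄ₑ⁻¹)^D`,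
is symmetric and deviatoric, and the dissipation `tr(M·(1/(2η))·M^D)` is nonnegative. -/
theorem maxwell_clausius_planck (Ce : Mat) (hCe : Ce.PosDef) (c10 c01 η : ℝ) (hη : 0 < η) :
    Ce * (dev (c10 • unimod Ce - c01 • (unimod Ce)⁻¹) * Ce⁻¹) =
        dev (c10 • unimod Ce - c01 • (unimod Ce)⁻¹) ∧
      (Ce * (dev (c10 • unimod Ce - c01 • (unimod Ce)⁻¹) * Ce⁻¹))ᵀ =
        Ce * (dev (c10 • unimod Ce - c01 • (unimod Ce)⁻¹) * Ce⁻¹) ∧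
      (Ce * (dev (c10 • unimod Ce - c01 • (unimod Ce)⁻¹) * Ce⁻¹)).trace = 0 ∧
      0 ≤ ((Ce * (dev (c10 • unimod Ce - c01 • (unimod Ce)⁻¹) * Ce⁻¹)) *
            ((1 / (2 * η)) • dev (Ce * (dev (c10 • unimod Ce - c01 • (unimod Ce)⁻¹) * Ce⁻¹)))).trace := by
  have hdet : (0 : ℝ) < Ce.det := hCe.det_pos
  have hu : IsUnit Ce.det := isUnit_iff_ne_zero.2 hdet.ne'
  set k : ℝ := Ce.det ^ (-(1 : ℝ) / 3) with hk
  have hkpos : 0 < k := Real.rpow_pos_of_pos hdet _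
  have hki : Invertible k := invertibleOfNonzero hkpos.ne'
  have hCeinv : Ce * Ce⁻¹ = 1 := Ce.mul_nonsing_inv hu
  have hCeinv' : Ce⁻¹ * Ce = 1 := Ce.nonsing_inv_mul hu
  have huinv : (unimod Ce)⁻¹ = ⅟ k • Ce⁻¹ := by
    rw [unimod, ← hk, Matrix.inv_smul (A := Ce) k hu]
  have hsymCe : Ceᵀ = Ce := hCe.1.eq
  have hsymCeinv : (Ce⁻¹)ᵀ = Ce⁻¹ := by
    rw [Matrix.transpose_nonsing_inv, hsymCe]
  set X : Mat := c10 • unimod Ce - c01 • (unimod Ce)⁻¹ with hX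
  set D : Mat := dev X with hD
  have hXeq : X = (c10 * k) • Ce - (c01 * ⅟ k) • Ce⁻¹ := by
    rw [hX, huinv, unimod, ← hk, smul_smul, smul_smul]
  have hcommX : Ce * X = X * Ce := by
    rw [hXeq]
    simp only [Matrix.mul_sub, Matrix.sub_mul, Matrix.mul_smul, Matrix.smul_mul,
      hCeinv, hCeinv']
  have hcomm : Ce * D = D * Ce := by
    rw [hD, dev]
    simp only [Matrix.mul_sub, Matrix.sub_mul, Matrix.mul_smul, Matrix.smul_mul,
      Matrix.mul_one, Matrix.one_mul, hcommX]
  have hM : Ce * (D * Ce⁻¹) = D := by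
    rw [← Matrix.mul_assoc, hcomm, Matrix.mul_assoc, hCeinv, Matrix.mul_one]
  have hsymX : Xᵀ = X := by
    rw [hXeq]
    simp [Matrix.transpose_sub, Matrix.transpose_smul, hsymCe, hsymCeinv]
  have hsymD : Dᵀ = D := by
    rw [hD, dev]
    simp [Matrix.transpose_sub, Matrix.transpose_smul, hsymX]
  have htrD : D.trace = 0 := by
    rw [hD, dev]
    simp [Matrix.trace_sub, Matrix.trace_smul, Matrix.trace_one]
  have hdevD : dev D = D := by
    rw [dev, htrD]
    simp
  refine ⟨hM, ?_, ?_, ?_⟩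
  · rw [hM, hsymD]
  · rw [hM, htrD]
  · rw [hM, hdevD, Matrix.mul_smul, Matrix.trace_smul]
    have hDji : ∀ i j, D j i = D i j := by
      intro i j
      conv_lhs => rw [← hsymD]
      rfl
    have htr : (D * D).trace = ∑ i, ∑ j, D i j * D i j := by
      simp only [Matrix.trace, Matrix.diag, Matrix.mul_apply]
      refine Finset.sum_congr rfl fun i _ => Finset.sum_congr rfl fun j _ => ?_
      rw [hDji i j]
    rw [smul_eq_mul, htr]
    have : 0 ≤ ∑ i, ∑ j, D i j * D i j :=
      Finset.sum_nonneg fun i _ => Finset.sum_nonneg fun j _ => mul_self_nonneg _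
    positivity
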